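/- arXiv:1009.4633 — 8 statements merged into one kernel-verified Lean document; each statement's English description precedes it below -/
import Mathlib

section
/- Let B be a group, φ ∈ Aut(B), and G = B ⋊ Z with Z acting via φ. Assume Z acts freely by conjugation on the set of conjugacy classes of nontrivial elements of B. If H is a virtually cyclic subgroup of G not contained in B, then H is infinite cyclic. -/
/-!
Let `π : B ⋊ ℤ → ℤ` be the projection, so that `B = ker π`, and pick `h ∈ H` with `π h ≠ 0`.
A finite-index cyclic subgroup `K` of `H` contains a power of `h`, hence has infinite image under
`π`, hence meets `ker π` trivially; so `H ∩ B` embeds in `H / K` and is finite. Conjugation by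
`h` permutes the finite group `H ∩ B`, so some power `hⁿ`, `n > 0`, centralizes it. Writing
`hⁿ = (b, t)` with `t = n · π h ≠ 0`, every `y ∈ H ∩ B` satisfies `b φᵗ(y) b⁻¹ = y`, and the
freeness hypothesis forces `y = 1`. Thus `π` is injective on `H`, which embeds in `ℤ`.
-/

/-- The semidirect product `B ⋊ ℤ` where `ℤ` acts via the automorphism `φ`. -/
abbrev SDP (B : Type*) [Group B] (φ : MulAut B) :=
  SemidirectProduct B (Multiplicative ℤ) (zpowersHom (MulAut B) φ)

/-- The canonical embedding of `B` into `B ⋊ ℤ`. -/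
def inlB (B : Type*) [Group B] (φ : MulAut B) : B →* SDP B φ :=
  SemidirectProduct.inl

namespace Subgroup

variable {G : Type*} [Group G]

theorem exists_pow_mem_centralizer_of_mem_normalizer {M : Subgroup G} [Finite M] {g : G}
    (hg : g ∈ normalizer (M : Set G)) : ∃ n, 0 < n ∧ g ^ n ∈ centralizer (M : Set G) := by
  have hfin : IsOfFinOrder (M.normalizerMonoidHom ⟨g, hg⟩) := isOfFinOrder_of_finite _
  refine ⟨_, hfin.orderOf_pos, ?_⟩
  have hker : (⟨g, hg⟩ : normalizer (M : Set G)) ^ orderOf (M.normalizerMonoidHom ⟨g, hg⟩) ∈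
      M.normalizerMonoidHom.ker := by
    rw [MonoidHom.mem_ker, map_pow, pow_orderOf_eq_one]
  rw [normalizerMonoidHom_ker, mem_subgroupOf] at hker
  simpa using hker

theorem finite_inf_of_inf_eq_bot_of_relIndex_ne_zero {K H N : Subgroup G} (hKN : K ⊓ N = ⊥)
    (hK : K.relIndex H ≠ 0) : Finite ↥(H ⊓ N) := by
  have hK' : K.relIndex (H ⊓ N) ≠ 0 := fun h => hK (relIndex_eq_zero_of_le_right inf_le_left h)
  rw [← inf_relIndex_right, ← inf_assoc, inf_right_comm, hKN, bot_inf_eq, relIndex_bot_left] at hK'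
  exact Nat.finite_of_card_ne_zero hK'

end Subgroup

section TorsionFree

variable {G A : Type*} [Group G] [Group A] [IsMulTorsionFree A] (f : G →* A)

theorem Subgroup.inf_ker_eq_bot_of_isCyclic {K : Subgroup G} [IsCyclic K] {k : G} (hk : k ∈ K)
    (hfk : f k ≠ 1) : K ⊓ f.ker = ⊥ := by
  obtain ⟨g, rfl⟩ := (K.isCyclic_iff_exists_zpowers_eq_top).mp ‹_›
  have hfg : f g ≠ 1 := by
    obtain ⟨m, rfl⟩ := mem_zpowers_iff.mp hk
    rintro hfg
    simp [hfg] at hfk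
  rw [eq_bot_iff]
  rintro _ ⟨⟨m, rfl⟩, hx⟩
  have hm : f g ^ m = 1 := by simpa using hx
  simp [(IsMulTorsionFree.zpow_eq_one_iff_right hfg).mp hm]

theorem Subgroup.exists_mem_map_ne_one_of_relIndex_ne_zero {K H : Subgroup G}
    (hK : K.relIndex H ≠ 0) {h : G} (hh : h ∈ H) (hfh : f h ≠ 1) : ∃ k ∈ K, f k ≠ 1 := by
  obtain ⟨n, hn, -, hhn⟩ := exists_pow_mem_of_relIndex_ne_zero hK hh
  exact ⟨h ^ n, hhn.1, by rwa [map_pow, Ne, pow_eq_one_iff_left hn.ne']⟩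

theorem Subgroup.infinite_of_map_ne_one {H : Subgroup G} {h : G} (hh : h ∈ H) (hfh : f h ≠ 1) :
    Infinite H := by
  refine Infinite.of_injective (fun n : ℕ => (⟨h, hh⟩ : H) ^ n)
    (injective_pow_iff_not_isOfFinOrder.mpr fun hfin => hfh ?_)
  exact (isOfFinOrder_iff_eq_one _).mp ((f.comp H.subtype).isOfFinOrder hfin)

end TorsionFree

namespace SemidirectProduct

variable {N G : Type*} [Group N] [Group G] {φ : G →* MulAut N}

theorem mul_inl_mul_inv (a : N ⋊[φ] G) (n : N) :
    a * inl n * a⁻¹ = inl (a.left * φ a.right n * a.left⁻¹) := by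
  ext <;> simp

theorem isConj_of_commute_inl {a : N ⋊[φ] G} {n : N} (h : Commute a (inl n)) :
    IsConj (φ a.right n) n := by
  have h' : a * inl n * a⁻¹ = inl n := by rw [h.eq, mul_inv_cancel_right]
  rw [mul_inl_mul_inv] at h'
  exact isConj_iff.mpr ⟨a.left, inl_injective h'⟩

end SemidirectProduct

open Subgroup SemidirectProduct

/-- If `ℤ` acts freely by conjugation on the conjugacy classes of nontrivial
elements of `B`, then every virtually cyclic subgroup of `G = B ⋊ ℤ` not
contained in `B` is infinite cyclic. -/
theorem stmt7 (B : Type*) [Group B] (φ : MulAut B)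
    (hfree : ∀ y : B, y ≠ 1 → ∀ r : ℤ, r ≠ 0 → ¬ IsConj ((φ ^ r) y) y)
    (H : Subgroup (SDP B φ))
    (hvc : ∃ K : Subgroup (SDP B φ), K ≤ H ∧ IsCyclic K ∧ K.relIndex H ≠ 0)
    (hnB : ¬ H ≤ (inlB B φ).range) :
    Infinite H ∧ IsCyclic H := by
  set π : SDP B φ →* Multiplicative ℤ := rightHom
  have hB : (inlB B φ).range = π.ker := range_inl_eq_ker_rightHom
  obtain ⟨h, hhH, hπh⟩ := SetLike.not_le_iff_exists.mp (hB ▸ hnB)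
  obtain ⟨K, -, hK, hKH⟩ := hvc
  obtain ⟨k, hkK, hπk⟩ := exists_mem_map_ne_one_of_relIndex_ne_zero π hKH hhH hπh
  have : Finite ↥(H ⊓ π.ker) :=
    finite_inf_of_inf_eq_bot_of_relIndex_ne_zero (inf_ker_eq_bot_of_isCyclic π hkK hπk) hKH
  have hnorm : h ∈ normalizer ((H ⊓ π.ker : Subgroup (SDP B φ)) : Set (SDP B φ)) :=
    inf_normalizer_le_normalizer_inf ⟨H.le_normalizer hhH, le_normalizer_of_normal (mem_top h)⟩
  obtain ⟨n, hn, hcent⟩ := exists_pow_mem_centralizer_of_mem_normalizer hnorm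
  have hHB : H ⊓ π.ker = ⊥ := by
    refine eq_bot_iff.mpr fun x ⟨hxH, hxB⟩ => ?_
    obtain ⟨c, rfl⟩ : x ∈ (inlB B φ).range := hB ▸ hxB
    by_contra hc
    have hπhn : (h ^ n).right ≠ 1 := by
      rwa [← rightHom_eq_right, map_pow, Ne, pow_eq_one_iff_left hn.ne']
    refine hfree c (fun h1 => hc (by simp [h1])) (Multiplicative.toAdd (h ^ n).right) hπhn ?_
    simpa using isConj_of_commute_inl ((mem_centralizer_iff.mp hcent _ ⟨hxH, hxB⟩).symm)
  refine ⟨infinite_of_map_ne_one π hhH hπh, isCyclic_of_injective (π.comp H.subtype) ?_⟩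
  rw [injective_iff_map_eq_one]
  exact fun x hx => Subtype.ext ((eq_bot_iff.mp hHB) ⟨x.2, hx⟩)
end

section
/- Let B be a nontrivial virtually cyclic group and φ ∈ Aut(B). Then the action of Z via φ on the set of conjugacy classes of nontrivial elements of B is not free; i.e., there exist a nontrivial y ∈ B and a nonzero integer r such that φ^r(y) is conjugate in B to y. -/
/-!
Let `⟨x⟩` be a cyclic subgroup of finite index. If `x` has finite order then `B` is finite, so
`φ` has finite order and `φ ^ orderOf φ` fixes every element. Otherwise `⟨x⟩ ≅ ℤ`, and some
positive power `φ(x)^m` lies in `⟨x⟩`, say `φ(x^m) = x^k`. Since `φ` preserves indices and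
`[B : ⟨x^j⟩] = |j| [B : ⟨x⟩]`, we get `|k| = m`, so `φ(x^m) = (x^m)^{±1}` and `φ²` fixes `x^m`.
-/

open Subgroup

namespace Subgroup

variable {G : Type*} [Group G] {x : G}

theorem relIndex_zpowers_zpow (hx : ¬IsOfFinOrder x) (j : ℤ) :
    (zpowers (x ^ j)).relIndex (zpowers x) = j.natAbs := by
  set f := zpowersHom G x
  have hinj : Function.Injective f := injective_zpow_iff_not_isOfFinOrder.mpr hx
  have hzmul : zpowers (Multiplicative.ofAdd j) = (AddSubgroup.zmultiples j).toSubgroup := by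
    ext; rfl
  calc (zpowers (x ^ j)).relIndex (zpowers x)
      = ((zpowers (Multiplicative.ofAdd j)).map f).relIndex ((⊤ : Subgroup _).map f) := by
        rw [MonoidHom.map_zpowers, ← MonoidHom.range_eq_map, range_zpowersHom]; rfl
    _ = j.natAbs := by
        rw [relIndex_map_map_of_injective _ _ hinj, relIndex_top_right, hzmul,
          AddSubgroup.index_toSubgroup, Int.index_zmultiples]

theorem index_zpowers_zpow (hx : ¬IsOfFinOrder x) (j : ℤ) :
    (zpowers (x ^ j)).index = j.natAbs * (zpowers x).index := by
  rw [← relIndex_zpowers_zpow hx j, relIndex_mul_index (zpowers_le.mpr (zpow_mem_zpowers x j))]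

end Subgroup

namespace MulAut

variable {G : Type*} [Group G] {x : G}

theorem exists_ne_one_apply_eq_or_eq_inv (φ : MulAut G) (hx : ¬IsOfFinOrder x)
    (hidx : (zpowers x).index ≠ 0) : ∃ y : G, y ≠ 1 ∧ (φ y = y ∨ φ y = y⁻¹) := by
  obtain ⟨m, hm, -, k, hk⟩ := exists_pow_mem_of_index_ne_zero hidx (φ x)
  have hφ : φ (x ^ (m : ℤ)) = x ^ k := by rw [map_zpow, zpow_natCast, ← hk]
  have hkm : k.natAbs = m := by
    have hindex := index_map_equiv (zpowers (x ^ (m : ℤ))) φ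
    rw [MonoidHom.map_zpowers, MonoidHom.coe_coe, hφ, index_zpowers_zpow hx,
      index_zpowers_zpow hx, Int.natAbs_natCast] at hindex
    exact Nat.eq_of_mul_eq_mul_right (Nat.pos_of_ne_zero hidx) hindex
  refine ⟨x ^ (m : ℤ), fun h ↦ hx (isOfFinOrder_iff_pow_eq_one.mpr ⟨m, hm, ?_⟩), ?_⟩
  · rwa [zpow_natCast] at h
  · rcases Int.natAbs_eq_iff.mp hkm with rfl | rfl
    · exact .inl hφ
    · exact .inr (by rw [hφ, zpow_neg])

end MulAut

/-- If `B` is a nontrivial virtually cyclic group and `φ` an automorphism of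
`B`, then the `ℤ`-action via `φ` on conjugacy classes of nontrivial elements of
`B` is not free: some nontrivial `y` and nonzero `r` have `φ^r(y)` conjugate to
`y`. -/
theorem stmt9 (B : Type*) [Group B] [Nontrivial B]
    (hvc : ∃ K : Subgroup B, IsCyclic K ∧ K.index ≠ 0) (φ : MulAut B) :
    ∃ y : B, y ≠ 1 ∧ ∃ r : ℤ, r ≠ 0 ∧ IsConj ((φ ^ r) y) y := by
  obtain ⟨K, hK, hKi⟩ := hvc
  obtain ⟨x, rfl⟩ := K.isCyclic_iff_exists_zpowers_eq_top.mp hK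
  suffices ∃ y : B, y ≠ 1 ∧ ∃ r : ℤ, r ≠ 0 ∧ (φ ^ r) y = y by
    obtain ⟨y, hy, r, hr, hfix⟩ := this
    exact ⟨y, hy, r, hr, by rw [hfix]⟩
  by_cases hx : IsOfFinOrder x
  · have : Finite B :=
      (finite_iff_finite_and_finiteIndex (zpowers x)).mpr ⟨hx.finite_zpowers.to_subtype, ⟨hKi⟩⟩
    obtain ⟨y, hy⟩ := exists_ne (1 : B)
    refine ⟨y, hy, orderOf φ, mod_cast (orderOf_pos φ).ne', ?_⟩
    rw [zpow_natCast, pow_orderOf_eq_one, MulAut.one_apply]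
  · obtain ⟨y, hy, hφy⟩ := φ.exists_ne_one_apply_eq_or_eq_inv hx hKi
    refine ⟨y, hy, 2, two_ne_zero, ?_⟩
    rcases hφy with h | h <;> simp [sq, h]
end

section
/- Let B be a group, φ ∈ Aut(B), G = B ⋊ Z, and assume Z acts freely by conjugation on the set of conjugacy classes of nontrivial elements of B. If H is an infinite cyclic subgroup of G not contained in B and y ∈ B, then H ∩ yHy⁻¹ is infinite if and only if y = 1. -/
/-- If `ℤ` acts freely by conjugation on conjugacy classes of nontrivial
elements of `B`, `H` is an infinite cyclic subgroup of `G = B ⋊ ℤ` not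
contained in `B`, and `y ∈ B`, then `H ∩ yHy⁻¹` is infinite iff `y = 1`. -/
theorem stmt10 (B : Type*) [Group B] (φ : MulAut B)
    (hfree : ∀ y : B, y ≠ 1 → ∀ r : ℤ, r ≠ 0 → ¬ IsConj ((φ ^ r) y) y)
    (H : Subgroup (SDP B φ)) (hHinf : Infinite H) (hHcyc : IsCyclic H)
    (hnB : ¬ H ≤ (inlB B φ).range) (y : B) :
    Infinite ↥(H ⊓ Subgroup.map (MulAut.conj (inlB B φ y)).toMonoidHom H) ↔
      y = 1 := by
  constructor
  · intro hinf
    by_contra hy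
    obtain ⟨g, hg⟩ := hHcyc.exists_generator
    -- the right component of g is nontrivial
    have hr : SemidirectProduct.rightHom (g : SDP B φ) ≠ 1 := by
      intro h1
      apply hnB
      intro x hx
      obtain ⟨m, hm⟩ := hg ⟨x, hx⟩
      have hx' : SemidirectProduct.rightHom x = 1 := by
        have := congrArg (fun z : H => SemidirectProduct.rightHom (z : SDP B φ)) hm
        simpa [SubgroupClass.coe_zpow, map_zpow, h1, eq_comm] using this
      show x ∈ SemidirectProduct.inl.range
      rw [SemidirectProduct.range_inl_eq_ker_rightHom]
      exact hx'
    -- a nontrivial element of the intersection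
    haveI := hinf
    obtain ⟨k, hkK, hk1⟩ := (Subgroup.nontrivial_iff_exists_ne_one
      (H ⊓ Subgroup.map (MulAut.conj (inlB B φ y)).toMonoidHom H)).mp inferInstance
    obtain ⟨hkH, hkmap⟩ := Subgroup.mem_inf.mp hkK
    obtain ⟨h, hhH, hconj⟩ := hkmap
    -- k = g^m, h = g^n
    obtain ⟨m, hm⟩ := hg ⟨k, hkH⟩
    obtain ⟨n, hn⟩ := hg ⟨h, hhH⟩
    have hmG : (g : SDP B φ) ^ m = k := by
      have := congrArg (Subtype.val) hm; simpa using this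
    have hnG : (g : SDP B φ) ^ n = h := by
      have := congrArg (Subtype.val) hn; simpa using this
    -- right components agree, so m = n
    have hrk : SemidirectProduct.rightHom k = SemidirectProduct.rightHom ((g : SDP B φ)) ^ m := by
      rw [← hmG, map_zpow]
    have hrh : SemidirectProduct.rightHom h = SemidirectProduct.rightHom ((g : SDP B φ)) ^ n := by
      rw [← hnG, map_zpow]
    have hconj' : SemidirectProduct.inl y * h * (SemidirectProduct.inl y)⁻¹ = k := by
      simpa [inlB, MulAut.conj_apply, mul_assoc] using hconj
    have hreq : SemidirectProduct.rightHom k = SemidirectProduct.rightHom h := by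
      rw [← hconj']
      simp [SemidirectProduct.rightHom_inl]
    have hmn : m = n := by
      have := hrk.symm.trans (hreq.trans hrh)
      have h2 : m • Multiplicative.toAdd (SemidirectProduct.rightHom (g : SDP B φ))
          = n • Multiplicative.toAdd (SemidirectProduct.rightHom (g : SDP B φ)) := by
        rw [← toAdd_zpow, ← toAdd_zpow, this]
      have hr0 : Multiplicative.toAdd (SemidirectProduct.rightHom (g : SDP B φ)) ≠ 0 := by
        intro h0
        exact hr (by rwa [← toAdd_eq_zero])
      have := h2
      simp only [smul_eq_mul] at this
      exact mul_right_cancel₀ hr0 this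
    -- hence k = h and k commutes with inl y
    have hkh : h = k := by rw [← hmG, ← hnG, hmn]
    rw [hkh] at hconj'
    -- left component equation
    have hleft := congrArg SemidirectProduct.left hconj'
    simp [SemidirectProduct.mul_left, SemidirectProduct.inv_left] at hleft
    -- right component of k is nonzero
    have hm0 : m ≠ 0 := by
      intro h0
      exact hk1 (by rw [← hmG, h0, zpow_zero])
    have hr0 : Multiplicative.toAdd (SemidirectProduct.rightHom (g : SDP B φ)) ≠ 0 := by
      intro h0
      exact hr (by rwa [← toAdd_eq_zero])
    have hs0 : Multiplicative.toAdd (SemidirectProduct.rightHom k) ≠ 0 := by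
      rw [hrk, toAdd_zpow, smul_eq_mul]
      exact mul_ne_zero hm0 hr0
    refine hfree y hy (Multiplicative.toAdd k.right) hs0 (isConj_iff.mpr ⟨k.left, ?_⟩)
    have h3 : y * k.left = k.left * ((φ ^ Multiplicative.toAdd k.right) y) :=
      mul_inv_eq_iff_eq_mul.mp hleft
    rw [← h3, mul_inv_cancel_right]
  · rintro rfl
    simpa [inlB, Subgroup.map_id] using hHinf
end

section
/- Let B be a group, φ ∈ Aut(B), G = B ⋊ Z, and suppose Z acts freely by conjugation on conjugacy classes of nontrivial elements of B. Then for every virtually cyclic subgroup H of G not contained in B, the commensurator Comm_G(H) = {g ∈ G : |H : H ∩ gHg⁻¹| < ∞ and |gHg⁻¹ : H ∩ gHg⁻¹| < ∞} is infinite cyclic. -/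
open Subgroup Subgroup.Commensurable

namespace Subgroup.Commensurable

variable {G : Type*} [Group G]

theorem le_commensurator (H : Subgroup G) : H ≤ commensurator H := fun h hh =>
  (commensurator_mem_iff H h).2 (by rw [conjAct_pointwise_smul_eq_self (le_normalizer hh)])

theorem of_le {H K : Subgroup G} (hKH : K ≤ H) (hi : K.relIndex H ≠ 0) : Commensurable K H :=
  ⟨hi, by rw [relIndex_eq_one.2 hKH]; exact one_ne_zero⟩

end Subgroup.Commensurable

section KernelCentralizers

variable {G A : Type*} [Group G] [Group A] [IsMulTorsionFree A] (π : G →* A)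

theorem eq_one_of_mem_commensurator_zpowers
    (hcent : ∀ g w : G, π g = 1 → π w ≠ 1 → Commute g w → g = 1)
    {k g : G} (hk : π k ≠ 1) (hg : g ∈ commensurator (zpowers k)) (hπg : π g = 1) :
    g = 1 := by
  obtain ⟨n, hn, -, hkn⟩ :=
    exists_pow_mem_of_relIndex_ne_zero ((commensurator_mem_iff _ g).1 hg).1 (mem_zpowers k)
  obtain ⟨_, ⟨m, rfl⟩, hconj⟩ := (mem_smul_pointwise_iff_exists _ _ _).1 (mem_inf.1 hkn).1
  rw [ConjAct.toConjAct_smul] at hconj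
  have hmn : m = n := by
    apply injective_zpow_iff_not_isOfFinOrder.2 (not_isOfFinOrder_of_isMulTorsionFree hk)
    simpa [hπg] using congrArg π hconj
  subst hmn
  simp only [zpow_natCast] at hconj
  refine hcent g (k ^ n) hπg ?_ (mul_inv_eq_iff_eq_mul.1 hconj)
  rw [map_pow, Ne, pow_eq_one_iff_left hn.ne']
  exact hk

theorem injective_restrict_commensurator_zpowers
    (hcent : ∀ g w : G, π g = 1 → π w ≠ 1 → Commute g w → g = 1)
    {k : G} (hk : π k ≠ 1) :
    Function.Injective (π.comp (commensurator (zpowers k)).subtype) := by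
  rw [injective_iff_map_eq_one]
  rintro ⟨g, hg⟩ hπg
  exact Subtype.ext (eq_one_of_mem_commensurator_zpowers π hcent hk hg hπg)

theorem infinite_and_isCyclic_commensurator [IsCyclic A]
    (hcent : ∀ g w : G, π g = 1 → π w ≠ 1 → Commute g w → g = 1)
    {H : Subgroup G} {k : G} (hk : π k ≠ 1) (hHk : Commensurable H (zpowers k)) :
    Infinite (commensurator H) ∧ IsCyclic (commensurator H) := by
  rw [Commensurable.eq hHk]
  refine ⟨?_, isCyclic_of_injective _ (injective_restrict_commensurator_zpowers π hcent hk)⟩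
  have hkinf : ¬ IsOfFinOrder k := fun hfin =>
    not_isOfFinOrder_of_isMulTorsionFree hk (π.isOfFinOrder hfin)
  exact ((infinite_zpowers.2 hkinf).mono (le_commensurator _)).to_subtype

theorem exists_zpowers_commensurable {H K : Subgroup G} (hKH : K ≤ H) (hK : IsCyclic K)
    (hi : K.relIndex H ≠ 0) (hH : ¬ H ≤ π.ker) :
    ∃ k, π k ≠ 1 ∧ Commensurable H (zpowers k) := by
  obtain ⟨k, rfl⟩ := K.isCyclic_iff_exists_zpowers_eq_top.1 hK
  refine ⟨k, fun hk => hH fun h hh => ?_, (Commensurable.of_le hKH hi).symm⟩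
  obtain ⟨n, hn, -, hhn⟩ := exists_pow_mem_of_relIndex_ne_zero hi hh
  have hπhn : h ^ n ∈ π.ker := zpowers_le.2 hk (mem_inf.1 hhn).1
  rwa [MonoidHom.mem_ker, map_pow, pow_eq_one_iff_left hn.ne'] at hπhn

end KernelCentralizers

theorem SemidirectProduct.eq_one_of_commute {N G : Type*} [Group N] [Group G]
    {φ : G →* MulAut N} (hfree : ∀ n : N, n ≠ 1 → ∀ g : G, g ≠ 1 → ¬ IsConj (φ g n) n)
    {x w : N ⋊[φ] G} (hx : x.right = 1) (hw : w.right ≠ 1) (hxw : Commute x w) : x = 1 := by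
  have hleft : x.left * w.left = w.left * φ w.right x.left := by
    simpa [hx] using congrArg SemidirectProduct.left hxw.eq
  by_contra hne
  refine hfree x.left (fun h => hne (SemidirectProduct.ext h hx)) w.right hw ?_
  exact isConj_iff.2 ⟨w.left, mul_inv_eq_iff_eq_mul.2 hleft.symm⟩

/-- If `ℤ` acts freely by conjugation on conjugacy classes of nontrivial
elements of `B`, then for every virtually cyclic subgroup `H` of `G = B ⋊ ℤ`
not contained in `B`, the commensurator of `H` in `G` is infinite cyclic. -/
theorem stmt11 (B : Type*) [Group B] (φ : MulAut B)
    (hfree : ∀ y : B, y ≠ 1 → ∀ r : ℤ, r ≠ 0 → ¬ IsConj ((φ ^ r) y) y)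
    (H : Subgroup (SDP B φ))
    (hvc : ∃ K : Subgroup (SDP B φ), K ≤ H ∧ IsCyclic K ∧ K.relIndex H ≠ 0)
    (hnB : ¬ H ≤ (inlB B φ).range) :
    Infinite (Subgroup.Commensurable.commensurator H) ∧
      IsCyclic (Subgroup.Commensurable.commensurator H) := by
  obtain ⟨K, hKH, hK, hi⟩ := hvc
  let π : SDP B φ →* Multiplicative ℤ := SemidirectProduct.rightHom
  have hH : ¬ H ≤ π.ker := by
    rwa [← SemidirectProduct.range_inl_eq_ker_rightHom]
  obtain ⟨k, hk, hHk⟩ := exists_zpowers_commensurable π hKH hK hi hH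
  refine infinite_and_isCyclic_commensurator π (fun g w hg hw hgw => ?_) hk hHk
  refine SemidirectProduct.eq_one_of_commute (fun y hy r hr => ?_) hg hw hgw
  exact hfree y hy r.toAdd (by simpa using hr)
end

section
/- Let G be a group and H an infinite virtually cyclic subgroup. Define an equivalence relation on infinite virtually cyclic subgroups by K ~ L iff K ∩ L is infinite (commensurability). Suppose the commensurator Comm_G(H) = {g ∈ G : H ∩ gHg⁻¹ is infinite} is itself virtually cyclic. Then Comm_G(H) is the unique maximal virtually cyclic subgroup of G containing H, and it equals its own normalizer in G. -/
/-! An infinite subgroup of a cyclic group `⟨c⟩` contains some `c ^ n` with `n ≠ 0`, so it has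
finite index; hence any two infinite subgroups of a virtually cyclic group are commensurable.
If `g` lies in a virtually cyclic `K ⊇ H`, or normalizes `Comm_G(H) ⊇ H`, then `gHg⁻¹` and `H` are
infinite subgroups of one virtually cyclic group, so `g ∈ Comm_G(H)`. -/

open Subgroup Pointwise

/-- A subgroup is virtually cyclic if it contains a cyclic subgroup of finite
index. -/
def VirtuallyCyclic {G : Type*} [Group G] (H : Subgroup G) : Prop :=
  ∃ K : Subgroup G, K ≤ H ∧ IsCyclic K ∧ K.relIndex H ≠ 0

theorem IsCyclic.index_ne_zero_of_infinite {C : Type*} [Group C] [IsCyclic C] (T : Subgroup C)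
    [Infinite T] : T.index ≠ 0 := by
  let := IsCyclic.commGroup (α := C) -- so that `T` is normal and `C ⧸ T` a group
  obtain ⟨c, hc⟩ := exists_zpow_surjective C
  obtain ⟨t, htT, ht1⟩ := (nontrivial_iff_exists_ne_one T).1 inferInstance
  obtain ⟨n, rfl⟩ := hc t
  have hn : n ≠ 0 := by rintro rfl; exact ht1 (zpow_zero c)
  have hfin : IsOfFinOrder (c : C ⧸ T) :=
    isOfFinOrder_iff_zpow_eq_one.2 ⟨n, hn, (QuotientGroup.eq_one_iff _).2 htT⟩
  have htop : zpowers (c : C ⧸ T) = ⊤ := by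
    refine eq_top_iff.2 fun q _ => ?_
    obtain ⟨g, rfl⟩ := QuotientGroup.mk_surjective q
    obtain ⟨m, rfl⟩ := hc g
    exact ⟨m, by simp⟩
  have : Finite (C ⧸ T) := by
    rw [← Set.finite_univ_iff, ← coe_top, ← htop]
    exact hfin.finite_zpowers
  exact index_ne_zero_of_finite

section

variable {G : Type*} [Group G]

theorem relIndex_ne_zero_of_infinite_of_isCyclic {T C : Subgroup G} [IsCyclic C] [Infinite T]
    (hTC : T ≤ C) : T.relIndex C ≠ 0 :=
  have : Infinite (T.subgroupOf C) := (subgroupOfEquivOfLe hTC).toEquiv.infinite_iff.2 ‹_›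
  IsCyclic.index_ne_zero_of_infinite _

theorem infinite_inf_of_relIndex_ne_zero {H K : Subgroup G} [Infinite K]
    (h : H.relIndex K ≠ 0) : Infinite (H ⊓ K : Subgroup G) := by
  have : (H.subgroupOf K).FiniteIndex := finiteIndex_iff.2 h
  have : Infinite (H.subgroupOf K) := by
    by_contra hfin
    rw [not_infinite_iff_finite] at hfin
    have := (finite_iff_finite_and_finiteIndex (H := H.subgroupOf K)).2 ⟨hfin, ‹_›⟩
    exact not_finite K
  rw [← inf_subgroupOf_right] at this
  exact (subgroupOfEquivOfLe inf_le_right).toEquiv.infinite_iff.1 this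

theorem VirtuallyCyclic.relIndex_ne_zero_of_infinite {S K : Subgroup G} (hK : VirtuallyCyclic K)
    (hSK : S ≤ K) [Infinite S] : S.relIndex K ≠ 0 := by
  obtain ⟨C, hCK, hC, hCK'⟩ := hK
  have hCS : C.relIndex S ≠ 0 := fun h => hCK' (relIndex_eq_zero_of_le_right hSK h)
  have : Infinite (C ⊓ S : Subgroup G) := infinite_inf_of_relIndex_ne_zero hCS
  have hfin : (C ⊓ S).relIndex K ≠ 0 :=
    relIndex_ne_zero_trans (relIndex_ne_zero_of_infinite_of_isCyclic inf_le_left) hCK'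
  exact fun h => hfin (relIndex_eq_zero_of_le_left inf_le_right h)

theorem VirtuallyCyclic.commensurable_of_infinite {A B K : Subgroup G} (hK : VirtuallyCyclic K)
    (hAK : A ≤ K) (hBK : B ≤ K) [Infinite A] [Infinite B] : Commensurable A B :=
  ⟨relIndex_ne_zero_trans (hK.relIndex_ne_zero_of_infinite hAK) (by simp [relIndex_eq_one.2 hBK]),
    relIndex_ne_zero_trans (hK.relIndex_ne_zero_of_infinite hBK) (by simp [relIndex_eq_one.2 hAK])⟩

theorem conjAct_smul_le_of_mem_normalizer {H K : Subgroup G} {g : G} (hg : g ∈ normalizer K)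
    (hHK : H ≤ K) : ConjAct.toConjAct g • H ≤ K :=
  (pointwise_smul_le_pointwise_smul_iff.2 hHK).trans (conjAct_pointwise_smul_eq_self hg).le

theorem le_commensurator (H : Subgroup G) : H ≤ Commensurable.commensurator H := fun _ hg => by
  rw [Commensurable.commensurator_mem_iff, conjAct_pointwise_smul_eq_self (le_normalizer hg)]

theorem VirtuallyCyclic.mem_commensurator_of_conjAct_smul_le {H K : Subgroup G} [Infinite H]
    (hK : VirtuallyCyclic K) (hHK : H ≤ K) {g : G} (hg : ConjAct.toConjAct g • H ≤ K) :
    g ∈ Commensurable.commensurator H :=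
  have : Infinite (ConjAct.toConjAct g • H : Subgroup G) :=
    (equivSMul _ H).toEquiv.infinite_iff.1 ‹_›
  (Commensurable.commensurator_mem_iff H g).2 (hK.commensurable_of_infinite hg hHK)

end

theorem stmt12_general (G : Type*) [Group G] (H : Subgroup G)
    (hinf : Infinite H)
    (hcvc : VirtuallyCyclic (Subgroup.Commensurable.commensurator H)) :
    H ≤ Subgroup.Commensurable.commensurator H ∧
      (∀ K : Subgroup G, VirtuallyCyclic K → H ≤ K →
        K ≤ Subgroup.Commensurable.commensurator H) ∧
      Subgroup.normalizer (Subgroup.Commensurable.commensurator H : Set G) =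
        Subgroup.Commensurable.commensurator H := by
  refine ⟨le_commensurator H, fun K hK hHK g hg => ?_, le_antisymm (fun g hg => ?_) le_normalizer⟩
  · exact hK.mem_commensurator_of_conjAct_smul_le hHK
      (conjAct_smul_le_of_mem_normalizer (le_normalizer hg) hHK)
  · exact hcvc.mem_commensurator_of_conjAct_smul_le (le_commensurator H)
      (conjAct_smul_le_of_mem_normalizer hg (le_commensurator H))

/-- If `H` is an infinite virtually cyclic subgroup of `G` whose commensurator
is itself virtually cyclic, then the commensurator is the unique maximal
virtually cyclic subgroup of `G` containing `H`, and it equals its own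
normalizer. -/
theorem stmt12 (G : Type*) [Group G] (H : Subgroup G)
    (hinf : Infinite H) (hvc : VirtuallyCyclic H)
    (hcvc : VirtuallyCyclic (Subgroup.Commensurable.commensurator H)) :
    H ≤ Subgroup.Commensurable.commensurator H ∧
      (∀ K : Subgroup G, VirtuallyCyclic K → H ≤ K →
        K ≤ Subgroup.Commensurable.commensurator H) ∧
      Subgroup.normalizer (Subgroup.Commensurable.commensurator H : Set G) =
        Subgroup.Commensurable.commensurator H :=
  stmt12_general G H hinf hcvc
end

section
/- Let B₀ be a group and φ: B₀ → B₀ a monomorphism such that φ^k(x) ≠ x for all nontrivial x ∈ B₀ and all k ≥ 1. Suppose that for each x ∈ B₀ there is assigned a finite nonempty subset [x]' of the conjugacy class of x in B₀, depending only on the conjugacy class of x, such that φ([x]') ⊆ [φ(x)]' for all x. Then for every nontrivial x ∈ B₀ and every n ≥ 1, φⁿ(x) is not conjugate in B₀ to x. -/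
/-- Criterion for freeness: if `φ` is a monomorphism of `B₀` with no nontrivial
periodic points and there is a conjugation-invariant assignment of finite
nonempty subsets of conjugacy classes compatible with `φ`, then no nontrivial
`x` has `φⁿ(x)` conjugate to `x` for `n ≥ 1`. -/
theorem stmt13 (B : Type*) [Group B] (φ : Monoid.End B)
    (hinj : Function.Injective φ)
    (hper : ∀ x : B, x ≠ 1 → ∀ k : ℕ, 1 ≤ k → (φ ^ k) x ≠ x)
    (c : B → Finset B)
    (hne : ∀ x : B, (c x).Nonempty)
    (hsub : ∀ x : B, ∀ z ∈ c x, IsConj x z)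
    (hconst : ∀ x y : B, IsConj x y → c x = c y)
    (hφ : ∀ x : B, ∀ z ∈ c x, φ z ∈ c (φ x)) :
    ∀ x : B, x ≠ 1 → ∀ n : ℕ, 1 ≤ n → ¬ IsConj ((φ ^ n) x) x := by
  have hpowadd : ∀ a b : ℕ, ∀ y : B, (φ ^ (a + b)) y = (φ ^ a) ((φ ^ b) y) := by
    intro a b y
    rw [pow_add]; rfl
  intro x hx n hn hconj
  -- iterated compatibility
  have hiter : ∀ m : ℕ, ∀ y z : B, z ∈ c y → (φ ^ m) z ∈ c ((φ ^ m) y) := by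
    intro m
    induction m with
    | zero => intro y z hz; simpa using hz
    | succ m ih =>
      intro y z hz
      have h := hφ _ _ (ih y z hz)
      have e : ∀ w : B, (φ ^ (m + 1)) w = φ ((φ ^ m) w) := by
        intro w; rw [add_comm m 1, hpowadd]; rfl
      rw [e z, e y]; exact h
  -- φ^m preserves conjugacy
  have hmapconj : ∀ m : ℕ, ∀ u v : B, IsConj u v → IsConj ((φ ^ m) u) ((φ ^ m) v) := by
    intro m u v huv
    rw [isConj_iff] at huv ⊢
    obtain ⟨g, hg⟩ := huv
    exact ⟨(φ ^ m) g, by rw [← map_inv, ← map_mul, ← map_mul, hg]⟩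
  have hconjiter : ∀ m : ℕ, IsConj ((φ ^ (n * m)) x) x := by
    intro m
    induction m with
    | zero =>
      exact (show IsConj x x from IsConj.refl x)
    | succ m ih =>
      have h1 : (φ ^ (n * (m + 1))) x = (φ ^ n) ((φ ^ (n * m)) x) := by
        rw [← hpowadd]; congr 1; ring
      rw [h1]
      exact (hmapconj n _ _ ih).trans hconj
  -- pick z in c x; all iterates land in c x
  obtain ⟨z, hz⟩ := hne x
  have hmem : ∀ m : ℕ, (φ ^ (n * m)) z ∈ c x := by
    intro m
    have := hiter (n * m) x z hz
    rwa [hconst _ _ (hconjiter m)] at this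
  -- pigeonhole
  have hmaps : ∀ m ∈ Finset.range ((c x).card + 1), (φ ^ (n * m)) z ∈ c x :=
    fun m _ => hmem m
  obtain ⟨a, ha, b, hb, hab, heq⟩ :=
    Finset.exists_ne_map_eq_of_card_lt_of_maps_to
      (by simp [Finset.card_range]) hmaps
  -- wlog a < b
  wlog hlt : a < b generalizing a b
  · exact this b hb a ha hab.symm heq.symm (by omega)
  -- injectivity of φ^m
  have hinjm : ∀ m : ℕ, Function.Injective ⇑(φ ^ m) := by
    intro m
    induction m with
    | zero => intro u v h; simpa using h
    | succ m ih =>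
      intro u v huv
      have e : ∀ w : B, (φ ^ (m + 1)) w = φ ((φ ^ m) w) := by
        intro w; rw [add_comm m 1, hpowadd]; rfl
      rw [e u, e v] at huv
      exact ih (hinj huv)
  have hsplit : (φ ^ (n * b)) z = (φ ^ (n * a)) ((φ ^ (n * (b - a))) z) := by
    rw [← hpowadd]
    congr 2
    have : n * a + n * (b - a) = n * b := by
      rw [← Nat.mul_add]; congr 1; omega
    omega
  have hper' : (φ ^ (n * (b - a))) z = z := by
    apply hinjm (n * a)
    rw [← hsplit, ← heq]
  have hz1 : z ≠ 1 := by
    intro h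
    obtain ⟨g, hg⟩ := isConj_iff.mp (hsub x z hz)
    apply hx
    have := hg
    rw [h] at this
    have : x = g⁻¹ * 1 * g := by
      rw [← this]; group
    simpa using this
  exact hper z hz1 (n * (b - a))
    (Nat.one_le_iff_ne_zero.mpr (Nat.mul_ne_zero (by omega) (by omega))) hper'
end

section
/- Let G be a group and suppose there exists r ≥ 1 such that every finite subgroup of G has order at most r. Then every infinite virtually cyclic subgroup K of G contains an infinite cyclic subgroup C with index |K : C| ≤ 2r. -/
/-!
A virtually cyclic infinite group `K` has a normal infinite cyclic subgroup `⟨a⟩` of finite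
index (the normal core of the given cyclic subgroup). Conjugation acts on `⟨a⟩ ≅ ℤ` through
`Aut ℤ = {±1}`, so the centralizer `L` of `a` has index at most 2 in `K`. In `L` the subgroup
`⟨a⟩` is central, so the transfer `L → ⟨a⟩` is `g ↦ g ^ [L : ⟨a⟩]`. Its kernel meets `⟨a⟩`
trivially, hence is a finite subgroup, of order at most `r`; its image is cyclic, and if the
image of `u` generates it then `⟨u⟩` together with the kernel is all of `L`, so
`[L : ⟨u⟩] ≤ r` and `[K : ⟨u⟩] ≤ 2r`.
-/

open Subgroup
open scoped IsMulCommutative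

def BoundedFiniteSubgroups (G : Type*) [Group G] (r : ℕ) : Prop :=
  ∀ H : Subgroup G, Finite H → Nat.card H ≤ r

theorem BoundedFiniteSubgroups.subgroup {G : Type*} [Group G] {r : ℕ}
    (h : BoundedFiniteSubgroups G r) (K : Subgroup G) : BoundedFiniteSubgroups K r := by
  intro H hH
  have e := equivMapOfInjective H K.subtype K.subtype_injective
  rw [Nat.card_congr e.toEquiv]
  exact h _ (Finite.of_equiv _ e.toEquiv)

theorem not_isOfFinOrder_of_finiteIndex {G : Type*} [Group G] [Infinite G] {a : G}
    [(zpowers a).FiniteIndex] : ¬IsOfFinOrder a := fun ha =>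
  have : Finite (zpowers a) := (finite_zpowers.mpr ha).to_subtype
  not_finite_iff_infinite.mpr ‹_› ((finite_iff_finite_and_finiteIndex (zpowers a)).mpr ⟨‹_›, ‹_›⟩)

namespace Subgroup

variable {G : Type*} [Group G]

theorem finite_of_disjoint_of_finiteIndex {A T : Subgroup G} [A.FiniteIndex]
    (h : Disjoint A T) : Finite T := by
  have hA : (A.subgroupOf T).index ≠ 0 := FiniteIndex.index_ne_zero
  rw [subgroupOf_eq_bot.mpr h, index_bot] at hA
  exact Nat.finite_of_card_ne_zero hA

theorem surjective_quotientMk_of_sup_eq_top {H N : Subgroup G} [N.Normal] (h : H ⊔ N = ⊤) :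
    Function.Surjective fun n : N => ((n : G) : G ⧸ H) := by
  intro q
  obtain ⟨g, rfl⟩ := QuotientGroup.mk_surjective q
  have hg : g ∈ ((N ⊔ H : Subgroup G) : Set G) := by rw [sup_comm, h]; trivial
  rw [normal_mul] at hg
  obtain ⟨n, hn, k, hk, rfl⟩ := hg
  exact ⟨⟨n, hn⟩, (QuotientGroup.eq.mpr (by simpa using hk)).symm⟩

theorem index_zpowers_coe (L : Subgroup G) (x : L) :
    (zpowers (x : G)).index = (zpowers x).index * L.index := by
  rw [← index_map_subtype, MonoidHom.map_zpowers, coe_subtype]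

theorem relIndex_zpowers_coe (L : Subgroup G) (x : L) :
    (zpowers (x : G)).relIndex L = (zpowers x).index := by
  rw [relIndex, subgroupOf, ← coe_subtype, ← MonoidHom.map_zpowers,
    comap_map_eq_self_of_injective L.subtype_injective]

theorem exists_normal_zpowers_of_isCyclic (C : Subgroup G) [IsCyclic C] [C.FiniteIndex] :
    ∃ a : G, (zpowers a).Normal ∧ (zpowers a).FiniteIndex := by
  have : IsCyclic C.normalCore := isCyclic_of_le (normalCore_le C)
  obtain ⟨a, ha⟩ := (C.normalCore.isCyclic_iff_exists_zpowers_eq_top).mp inferInstance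
  exact ⟨a, ha ▸ normalCore_normal C, ha ▸ finiteIndex_normalCore C⟩

end Subgroup

section Centralizer

variable {G : Type*} [Group G] {a : G} [(zpowers a).Normal]

theorem conj_eq_or_eq_inv_of_normal (ha : ¬IsOfFinOrder a) (g : G) :
    g * a * g⁻¹ = a ∨ g * a * g⁻¹ = a⁻¹ := by
  have h := Normal.map_conj_eq (H := zpowers a) g
  rw [MonoidHom.map_zpowers, eq_comm] at h
  rcases (zpowers_eq_zpowers_iff ha).mp h with h | h
  · exact Or.inl h.symm
  · exact Or.inr h.symm

theorem index_centralizer_le_two_of_normal (ha : ¬IsOfFinOrder a) :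
    (centralizer {a}).FiniteIndex ∧ (centralizer {a}).index ≤ 2 := by
  have horbit : MulAction.orbit (ConjAct G) a ⊆ {a, a⁻¹} := by
    rintro _ ⟨g, rfl⟩
    simpa [ConjAct.smul_def] using conj_eq_or_eq_inv_of_normal ha (ConjAct.ofConjAct g)
  have hindex : (centralizer {a}).index = (MulAction.orbit (ConjAct G) a).ncard := by
    rw [centralizer_eq_comap_stabilizer, ← MulAction.index_stabilizer]
    exact index_comap_of_surjective _ (f := ConjAct.toConjAct.toMonoidHom)
      ConjAct.toConjAct.surjective
  have hfin : (MulAction.orbit (ConjAct G) a).Finite := (Set.toFinite _).subset horbit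
  refine ⟨⟨?_⟩, ?_⟩
  · rw [hindex]
    exact (Set.ncard_pos hfin).mpr ⟨a, MulAction.mem_orbit_self a⟩ |>.ne'
  · rw [hindex]
    exact (Set.ncard_le_ncard horbit).trans ((Set.ncard_insert_le _ _).trans_eq (by simp))

end Centralizer

section Transfer

variable {L : Type*} [Group L] {a : L} [(zpowers a).FiniteIndex]

theorem transfer_id_zpowers_of_mem_center (ha : a ∈ center L) (g : L) :
    ((MonoidHom.id (zpowers a)).transfer g : L) = g ^ (zpowers a).index := by
  have hcent : zpowers a ≤ center L := zpowers_le.mpr ha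
  rw [MonoidHom.transfer_eq_pow _ g fun k g₀ hk => by
    rw [← mul_right_inj, ← (hcent hk).comm, mul_inv_cancel_right]]
  rfl

theorem exists_zpowers_index_le_of_mem_center {r : ℕ} (hr : BoundedFiniteSubgroups L r)
    (ha : a ∈ center L) (ha' : ¬IsOfFinOrder a) :
    ∃ u : L, (zpowers u).FiniteIndex ∧ (zpowers u).index ≤ r := by
  set τ := (MonoidHom.id (zpowers a)).transfer
  have hdisj : Disjoint (zpowers a) τ.ker := by
    rw [disjoint_iff_inf_le]
    rintro _ ⟨⟨k, rfl⟩, hk⟩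
    have hk' : a ^ (k * (zpowers a).index) = a ^ (0 : ℤ) := by
      rw [zpow_mul, zpow_natCast, ← transfer_id_zpowers_of_mem_center ha, hk]
      simp
    have hk0 : k = 0 :=
      (mul_eq_zero.mp (injective_zpow_iff_not_isOfFinOrder.mpr ha' hk')).resolve_right
        (Nat.cast_ne_zero.mpr FiniteIndex.index_ne_zero)
    simp [hk0]
  have : Finite τ.ker := finite_of_disjoint_of_finiteIndex hdisj
  obtain ⟨v, hv⟩ := τ.range.isCyclic_iff_exists_zpowers_eq_top.mp inferInstance
  obtain ⟨u, rfl⟩ : v ∈ τ.range := hv ▸ mem_zpowers v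
  have hsup : zpowers u ⊔ τ.ker = ⊤ := by
    rw [← comap_map_eq, MonoidHom.map_zpowers, hv, MonoidHom.comap_range_self]
  have hsurj := surjective_quotientMk_of_sup_eq_top hsup
  have : Finite (L ⧸ zpowers u) := Finite.of_surjective _ hsurj
  exact ⟨u, finiteIndex_of_finite_quotient,
    (Nat.card_le_card_of_surjective _ hsurj).trans (hr _ ‹_›)⟩

end Transfer

theorem exists_zpowers_index_le_two_mul {G : Type*} [Group G] [Infinite G] {r : ℕ}
    (hr : BoundedFiniteSubgroups G r) (C : Subgroup G) [IsCyclic C] [C.FiniteIndex] :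
    ∃ u : G, (zpowers u).FiniteIndex ∧ (zpowers u).index ≤ 2 * r := by
  obtain ⟨a, _, haC⟩ := exists_normal_zpowers_of_isCyclic C
  have ha : ¬IsOfFinOrder a := not_isOfFinOrder_of_finiteIndex
  obtain ⟨hLfin, hL2⟩ := index_centralizer_le_two_of_normal ha
  set L := centralizer {a}
  let a' : L := ⟨a, mem_centralizer_singleton_iff.mpr rfl⟩
  have hcenter : a' ∈ center L :=
    mem_center_iff.mpr fun g => Subtype.ext (mem_centralizer_singleton_iff.mp g.2)
  have : (zpowers a').FiniteIndex :=
    ⟨left_ne_zero_of_mul (index_zpowers_coe L a' ▸ haC.index_ne_zero)⟩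
  obtain ⟨u, hu, hur⟩ := exists_zpowers_index_le_of_mem_center (hr.subgroup L) hcenter
    (Submonoid.isOfFinOrder_coe.not.mp ha)
  refine ⟨u, ⟨?_⟩, ?_⟩
  · rw [index_zpowers_coe]
    exact mul_ne_zero hu.index_ne_zero hLfin.index_ne_zero
  · rw [index_zpowers_coe, mul_comm]
    exact Nat.mul_le_mul hL2 hur

theorem stmt16_general (G : Type*) [Group G] (r : ℕ)
    (hbound : ∀ H : Subgroup G, Finite H → Nat.card H ≤ r)
    (K : Subgroup G) (hKinf : Infinite K)
    (hKvc : ∃ C : Subgroup G, C ≤ K ∧ IsCyclic C ∧ C.relIndex K ≠ 0) :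
    ∃ C : Subgroup G, C ≤ K ∧ Infinite C ∧ IsCyclic C ∧
      C.relIndex K ≠ 0 ∧ C.relIndex K ≤ 2 * r := by
  obtain ⟨C, hCK, hC, hCK'⟩ := hKvc
  have : IsCyclic (C.subgroupOf K) := (subgroupOfEquivOfLe hCK).isCyclic.mpr hC
  have : (C.subgroupOf K).FiniteIndex := ⟨hCK'⟩
  obtain ⟨u, hu, hur⟩ :=
    exists_zpowers_index_le_two_mul (BoundedFiniteSubgroups.subgroup hbound K) (C.subgroupOf K)
  have hu' : ¬IsOfFinOrder (u : G) := fun h =>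
    not_isOfFinOrder_of_finiteIndex (a := u) (Submonoid.isOfFinOrder_coe.mp h)
  refine ⟨zpowers (u : G), zpowers_le.mpr u.2, (infinite_zpowers.mpr hu').to_subtype,
    inferInstance, ?_, ?_⟩
  · rw [relIndex_zpowers_coe]; exact hu.index_ne_zero
  · rw [relIndex_zpowers_coe]; exact hur

/-- If every finite subgroup of `G` has order at most `r`, then every infinite
virtually cyclic subgroup `K` of `G` contains an infinite cyclic subgroup `C`
of index at most `2r` in `K`. -/
theorem stmt16 (G : Type*) [Group G] (r : ℕ) (hr : 1 ≤ r)
    (hbound : ∀ H : Subgroup G, Finite H → Nat.card H ≤ r)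
    (K : Subgroup G) (hKinf : Infinite K)
    (hKvc : ∃ C : Subgroup G, C ≤ K ∧ IsCyclic C ∧ C.relIndex K ≠ 0) :
    ∃ C : Subgroup G, C ≤ K ∧ Infinite C ∧ IsCyclic C ∧
      C.relIndex K ≠ 0 ∧ C.relIndex K ≤ 2 * r :=
  stmt16_general G r hbound K hKinf hKvc
end

section
/- Let G be a finitely generated group acting on a tree T such that every element g ∈ G fixes some point of T (every cyclic subgroup has nonempty fixed point set). Then G has a global fixed point: T^G ≠ ∅. -/
/-!
The fixed-point set of a tree automorphism is a subtree (a geodesically convex set), and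
subtrees have the Helly property: finitely many pairwise intersecting subtrees have a common
vertex, because any three vertices of a tree have a median. Hence it suffices that any two
generators `g`, `h` have a common fixed point. For `q` fixed by `h`, the vertex of `Fix g`
nearest to `q` is the midpoint of the geodesic `[q, g q]`; since `(g * h) q = g q`, the vertex
of `Fix (g * h)` nearest to `q` is the same midpoint, and a point fixed by `g` and `g * h` is
fixed by `h`.
-/

open MulAction

namespace SimpleGraph

variable {V : Type*} {T : SimpleGraph V}

def Between (T : SimpleGraph V) (x m y : V) : Prop :=
  T.dist x m + T.dist m y = T.dist x y

lemma Between.symm {x m y : V} (h : T.Between x m y) : T.Between y m x := by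
  unfold Between at h ⊢
  rw [T.dist_comm (u := y) (v := m), T.dist_comm (u := m) (v := x),
    T.dist_comm (u := y) (v := x)]
  omega

def IsMidpoint (T : SimpleGraph V) (x m y : V) : Prop :=
  T.Between x m y ∧ 2 * T.dist x m = T.dist x y

def IsConvex (T : SimpleGraph V) (A : Set V) : Prop :=
  ∀ x ∈ A, ∀ y ∈ A, ∀ m, T.Between x m y → m ∈ A

lemma IsConvex.inter {A B : Set V} (hA : T.IsConvex A) (hB : T.IsConvex B) :
    T.IsConvex (A ∩ B) :=
  fun x hx y hy m hm => ⟨hA x hx.1 y hy.1 m hm, hB x hx.2 y hy.2 m hm⟩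

lemma exists_mem_forall_dist_le (T : SimpleGraph V) (x : V) {S : Set V} (hS : S.Nonempty) :
    ∃ p ∈ S, ∀ q ∈ S, T.dist x p ≤ T.dist x q :=
  ⟨_, Function.argminOn_mem _ S hS, fun _ hq => Function.argminOn_le (T.dist x) S hq⟩

lemma Walk.IsPath.append_of_support_inter {x m y : V} {p : T.Walk x m} {q : T.Walk m y}
    (hp : p.IsPath) (hq : q.IsPath) (h : ∀ v ∈ p.support, v ∈ q.support → v = m) :
    (p.append q).IsPath := by
  rw [Walk.isPath_def, Walk.support_append]
  have hq' := hq.support_nodup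
  rw [← q.cons_tail_support, List.nodup_cons] at hq'
  refine hp.support_nodup.append hq'.2 fun v hvp hvq => ?_
  obtain rfl := h v hvp (List.mem_of_mem_tail hvq)
  exact hq'.1 hvq

namespace IsTree

variable (hT : T.IsTree)
include hT

lemma length_eq_dist {u v : V} {p : T.Walk u v} (hp : p.IsPath) : p.length = T.dist u v := by
  obtain ⟨q, hq, hql⟩ := hT.connected.exists_path_of_dist u v
  rw [(hT.existsUnique_path u v).unique hp hq, hql]

lemma between_of_append {x m y : V} {p : T.Walk x m} {q : T.Walk m y}
    (hpq : (p.append q).IsPath) : T.Between x m y := by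
  rw [Between, ← hT.length_eq_dist hpq.of_append_left, ← hT.length_eq_dist hpq.of_append_right,
    ← hT.length_eq_dist hpq, Walk.length_append]

lemma between_of_mem_support {x m y : V} {p : T.Walk x y} (hp : p.IsPath) (hm : m ∈ p.support) :
    T.Between x m y := by
  classical
  exact hT.between_of_append (p.take_spec hm ▸ hp)

lemma mem_support_of_between {x m y : V} (h : T.Between x m y) {p : T.Walk x y}
    (hp : p.IsPath) : m ∈ p.support := by
  obtain ⟨p₁, -, hp₁⟩ := hT.connected.exists_path_of_dist x m
  obtain ⟨p₂, -, hp₂⟩ := hT.connected.exists_path_of_dist m y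
  have hgeod : (p₁.append p₂).IsPath :=
    Walk.isPath_of_length_eq_dist _ (by rw [Walk.length_append, hp₁, hp₂, h])
  rw [(hT.existsUnique_path x y).unique hp hgeod, Walk.mem_support_append_iff]
  exact Or.inl p₁.end_mem_support

lemma eq_of_between_of_dist_eq {x m m' y : V} (h : T.Between x m y) (h' : T.Between x m' y)
    (hd : T.dist x m = T.dist x m') : m = m' := by
  classical
  obtain ⟨p, hp, -⟩ := hT.connected.exists_path_of_dist x y
  have hm := hT.mem_support_of_between h hp
  have hm' := hT.mem_support_of_between h' hp
  rw [← p.getVert_length_takeUntil hm, ← p.getVert_length_takeUntil hm',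
    hT.length_eq_dist (hp.takeUntil hm), hT.length_eq_dist (hp.takeUntil hm'), hd]

lemma eq_of_isMidpoint {x m m' y : V} (h : T.IsMidpoint x m y) (h' : T.IsMidpoint x m' y) :
    m = m' :=
  hT.eq_of_between_of_dist_eq h.1 h'.1 (by have := h.2; have := h'.2; omega)

/-- The median of `a, b, c` is the point of the geodesic `[a, b]` nearest to `c`. -/
lemma exists_median (a b c : V) :
    ∃ m, T.Between a m b ∧ T.Between b m c ∧ T.Between c m a := by
  classical
  obtain ⟨P, hP, -⟩ := hT.connected.exists_path_of_dist a b
  obtain ⟨m, hmP, hmin⟩ :=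
    T.exists_mem_forall_dist_le c (S := {v | v ∈ P.support}) ⟨a, P.start_mem_support⟩
  obtain ⟨W, hW, -⟩ := hT.connected.exists_path_of_dist c m
  have hmeet : ∀ v ∈ W.support, v ∈ P.support → v = m := by
    intro v hvW hvP
    have hcv := hT.between_of_mem_support hW hvW
    have := hmin v hvP
    unfold Between at hcv
    exact hT.connected.dist_eq_zero_iff.mp (by omega)
  have hca : T.Between c m a := hT.between_of_append <|
    hW.append_of_support_inter (hP.takeUntil hmP).reverse fun v hvW hvP => hmeet v hvW <| by
      rw [Walk.support_reverse, List.mem_reverse] at hvP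
      exact P.support_takeUntil_subset_support hmP hvP
  have hcb : T.Between c m b := hT.between_of_append <|
    hW.append_of_support_inter (hP.dropUntil hmP) fun v hvW hvP =>
      hmeet v hvW (P.support_dropUntil_subset_support hmP hvP)
  exact ⟨m, hT.between_of_mem_support hP hmP, hcb.symm, hca⟩

lemma nonempty_inter_of_isConvex {A B C : Set V} (hA : T.IsConvex A) (hB : T.IsConvex B)
    (hC : T.IsConvex C) (hAB : (A ∩ B).Nonempty) (hAC : (A ∩ C).Nonempty)
    (hBC : (B ∩ C).Nonempty) : (A ∩ B ∩ C).Nonempty := by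
  obtain ⟨a, haB, haC⟩ := hBC
  obtain ⟨b, hbA, hbC⟩ := hAC
  obtain ⟨c, hcA, hcB⟩ := hAB
  obtain ⟨m, hamb, hbmc, hcma⟩ := hT.exists_median a b c
  exact ⟨m, ⟨hA b hbA c hcA m hbmc, hB c hcB a haB m hcma⟩, hC a haC b hbC m hamb⟩

/-- Helly's theorem for subtrees. -/
lemma nonempty_biInter_of_isConvex {ι : Type*} (F : Finset ι) (A : ι → Set V)
    (hA : ∀ i ∈ F, T.IsConvex (A i)) (hAA : ∀ i ∈ F, ∀ j ∈ F, (A i ∩ A j).Nonempty) :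
    (⋂ i ∈ F, A i).Nonempty := by
  rcases F.eq_empty_or_nonempty with rfl | hF
  · obtain ⟨v⟩ := hT.connected.nonempty
    exact ⟨v, by simp⟩
  induction hF using Finset.Nonempty.cons_induction generalizing A with
  | singleton i => simpa using hAA i (by simp) i (by simp)
  | cons i F _ hF ih =>
    obtain ⟨v, hv⟩ := ih (fun j => A j ∩ A i)
      (fun j hj => (hA j (by simp [hj])).inter (hA i (by simp))) fun j hj k hk => by
        obtain ⟨v, ⟨hvj, hvk⟩, hvi⟩ := hT.nonempty_inter_of_isConvex (hA j (by simp [hj]))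
          (hA k (by simp [hk])) (hA i (by simp)) (hAA j (by simp [hj]) k (by simp [hk]))
          (hAA j (by simp [hj]) i (by simp)) (hAA k (by simp [hk]) i (by simp))
        exact ⟨v, ⟨hvj, hvi⟩, hvk, hvi⟩
    obtain ⟨j, hj⟩ := hF
    simp only [Set.mem_iInter] at hv
    refine ⟨v, Set.mem_iInter₂.mpr ?_⟩
    simp only [Finset.mem_cons]
    rintro k (rfl | hk)
    · exact (hv j hj).2
    · exact (hv k hk).1

end IsTree

section Action

variable {G : Type*} [Group G] [MulAction G V]
  (hact : ∀ (g : G) (u v : V), T.Adj u v → T.Adj (g • u) (g • v))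
include hact

lemma dist_smul (hconn : T.Connected) (g : G) (u v : V) :
    T.dist (g • u) (g • v) = T.dist u v := by
  have dist_smul_le (g : G) (u v : V) : T.dist (g • u) (g • v) ≤ T.dist u v := by
    obtain ⟨p, hp⟩ := hconn.exists_walk_length_eq_dist u v
    have := dist_le (p.map ⟨(g • ·), hact g _ _⟩)
    rwa [Walk.length_map, hp] at this
  refine (dist_smul_le g u v).antisymm ?_
  simpa using dist_smul_le g⁻¹ (g • u) (g • v)

lemma Between.smul (hconn : T.Connected) (g : G) {x m y : V} (h : T.Between x m y) :
    T.Between (g • x) (g • m) (g • y) := by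
  rwa [Between, dist_smul hact hconn, dist_smul hact hconn, dist_smul hact hconn]

variable (hT : T.IsTree)
include hT

lemma IsTree.isConvex_fixedBy (g : G) : T.IsConvex (fixedBy V g) := by
  intro x hx y hy m hm
  have hgm : T.Between x (g • m) y := by
    simpa only [mem_fixedBy.mp hx, mem_fixedBy.mp hy] using hm.smul hact hT.connected g
  refine (hT.eq_of_between_of_dist_eq hm hgm ?_).symm
  conv_rhs => rw [← mem_fixedBy.mp hx]
  rw [dist_smul hact hT.connected]

lemma IsTree.isMidpoint_of_nearest_fixedBy {g : G} {x p : V} (hp : p ∈ fixedBy V g)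
    (hmin : ∀ q ∈ fixedBy V g, T.dist x p ≤ T.dist x q) : T.IsMidpoint x p (g • x) := by
  rw [mem_fixedBy] at hp
  obtain ⟨A, hA, -⟩ := hT.connected.exists_path_of_dist x p
  obtain ⟨C, hC, -⟩ := hT.connected.exists_path_of_dist p (g • x)
  -- A common vertex `v` of `[x, p]` and `[p, g x]` is fixed by `g`, since `g⁻¹ v` lies on
  -- `[x, p]` at the same distance from `p`; by minimality of `p` it is `p` itself.
  have hxpgx : T.Between x p (g • x) := hT.between_of_append <|
    hA.append_of_support_inter hC fun v hvA hvC => by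
      have hxvp := hT.between_of_mem_support hA hvA
      have hxv'p : T.Between x (g⁻¹ • v) p := by
        have := (hT.between_of_mem_support hC hvC).smul hact hT.connected g⁻¹
        rw [inv_smul_smul, inv_smul_eq_iff.mpr hp.symm] at this
        exact this.symm
      have hv'p : T.dist (g⁻¹ • v) p = T.dist v p := by
        rw [← dist_smul hact hT.connected g, smul_inv_smul, hp]
      have hv : g • v = v := eq_inv_smul_iff.mp <|
        hT.eq_of_between_of_dist_eq hxvp hxv'p (by unfold Between at hxvp hxv'p; omega)
      have := hmin v hv
      unfold Between at hxvp
      exact hT.connected.dist_eq_zero_iff.mp (by omega)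
  refine ⟨hxpgx, ?_⟩
  have hpgx : T.dist p (g • x) = T.dist x p := by
    conv_lhs => rw [← hp]
    rw [dist_smul hact hT.connected, dist_comm]
  unfold Between at hxpgx
  omega

lemma IsTree.nonempty_fixedBy_inter {g h : G} (hg : (fixedBy V g).Nonempty)
    (hh : (fixedBy V h).Nonempty) (hgh : (fixedBy V (g * h)).Nonempty) :
    (fixedBy V g ∩ fixedBy V h).Nonempty := by
  obtain ⟨q, hq⟩ := hh
  obtain ⟨p, hp, hpmin⟩ := T.exists_mem_forall_dist_le q hg
  obtain ⟨p', hp', hp'min⟩ := T.exists_mem_forall_dist_le q hgh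
  have hmid := hT.isMidpoint_of_nearest_fixedBy hact hp hpmin
  have hmid' := hT.isMidpoint_of_nearest_fixedBy hact hp' hp'min
  rw [mul_smul, mem_fixedBy.mp hq] at hmid'
  obtain rfl := hT.eq_of_isMidpoint hmid hmid'
  refine ⟨p, hp, ?_⟩
  rw [mem_fixedBy, mul_smul, smul_eq_iff_eq_inv_smul] at hp'
  rw [mem_fixedBy, hp', inv_smul_eq_iff, mem_fixedBy.mp hp]

end Action

end SimpleGraph

theorem stmt19_general (G V : Type*) [Group G] (T : SimpleGraph V) (hT : T.IsTree)
    [MulAction G V]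
    (hact : ∀ (g : G) (u v : V), T.Adj u v → T.Adj (g • u) (g • v))
    (hfg : Group.FG G)
    (hfix : ∀ g : G, ∃ v : V, g • v = v) :
    ∃ v : V, ∀ g : G, g • v = v := by
  obtain ⟨S, hS⟩ := hfg
  obtain ⟨v, hv⟩ := hT.nonempty_biInter_of_isConvex S (fixedBy V)
    (fun g _ => hT.isConvex_fixedBy hact g)
    fun g _ h _ => hT.nonempty_fixedBy_inter hact (hfix g) (hfix h) (hfix (g * h))
  have hSv : Subgroup.closure (S : Set G) ≤ stabilizer G v :=
    (Subgroup.closure_le _).mpr fun g hg => Set.mem_iInter₂.mp hv g hg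
  exact ⟨v, fun g => hSv (hS ▸ Subgroup.mem_top g)⟩

/-- Serre's fixed point theorem: if a finitely generated group `G` acts on a
tree `T` (by graph automorphisms, without inversions) so that every element of
`G` fixes some vertex, then `G` has a global fixed vertex. -/
theorem stmt19 (G V : Type*) [Group G] (T : SimpleGraph V) (hT : T.IsTree)
    [MulAction G V]
    (hact : ∀ (g : G) (u v : V), T.Adj u v → T.Adj (g • u) (g • v))
    (hnoinv : ∀ (g : G) (u v : V), T.Adj u v → ¬(g • u = v ∧ g • v = u))
    (hfg : Group.FG G)
    (hfix : ∀ g : G, ∃ v : V, g • v = v) :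
    ∃ v : V, ∀ g : G, g • v = v :=
  stmt19_general G V T hT hact hfg hfix
end
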